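/- arXiv:1906.01545 — 8 statements merged into one kernel-verified Lean document; each statement's English description precedes it below -/
import Mathlib

section
/- Λ = Λ_min if and only if (1) the magnitudes l_1,...,l_V are (as a multiset) the V smallest elements of the multiset 𝓛, and (2) the sequence l_1,...,l_V is sorted in nondecreasing order (given that p_1 ≥ ... ≥ p_V). -/
open Finset

/-- permuting `univ.val` by an equiv gives the same multiset -/
lemma map_perm_univ {V : ℕ} (e : Equiv.Perm (Fin V)) :
    Finset.univ.val.map ⇑e = Finset.univ.val := by
  have := congrArg Finset.val (Finset.map_univ_equiv e)
  simpa [Finset.map_val] using this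

/-- the multiset of values is invariant under precomposition by a permutation -/
lemma map_comp_perm {V : ℕ} (l : Fin V → ℝ) (e : Equiv.Perm (Fin V)) :
    Finset.univ.val.map (l ∘ ⇑e) = Finset.univ.val.map l := by
  rw [← Multiset.map_map, map_perm_univ]

/-- pointwise comparison of the sorted tuples -/
lemma sorted_pointwise_le {V : ℕ} {𝓛 : Multiset ℝ} {l l' : Fin V → ℝ}
    (hl : Finset.univ.val.map l ≤ 𝓛) (hl' : Finset.univ.val.map l' ≤ 𝓛)
    (hmin : ∀ x ∈ 𝓛 - Finset.univ.val.map l, ∀ i : Fin V, l i ≤ x)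
    (k : Fin V) : (l ∘ Tuple.sort l) k ≤ (l' ∘ Tuple.sort l') k := by
  by_contra hcon
  push_neg at hcon
  set m := l ∘ Tuple.sort l with hm
  set m' := l' ∘ Tuple.sort l' with hm'
  set c := m k with hc
  -- counting elements < c
  have hmapm : Finset.univ.val.map m = Finset.univ.val.map l := map_comp_perm l _
  have hmapm' : Finset.univ.val.map m' = Finset.univ.val.map l' := map_comp_perm l' _
  have cardfun : ∀ f : Fin V → ℝ,
      Multiset.card ((Finset.univ.val.map f).filter (· < c)) =
        (Finset.univ.filter (fun i => f i < c)).card := by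
    intro f
    rw [Multiset.filter_map, Multiset.card_map]
    rfl
  -- A-count ≤ k
  have hA : Multiset.card ((Finset.univ.val.map l).filter (· < c)) ≤ (k : ℕ) := by
    rw [← hmapm, cardfun]
    calc (Finset.univ.filter (fun i => m i < c)).card
        ≤ (Finset.Iio k).card := by
          apply Finset.card_le_card
          intro i hi
          simp only [Finset.mem_filter] at hi
          simp only [Finset.mem_Iio]
          by_contra hik
          push_neg at hik
          exact absurd (Tuple.monotone_sort l hik) (by simpa [hm, hc] using not_le.2 hi.2)
      _ = (k : ℕ) := Fin.card_Iio k
  -- B-count ≥ k+1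
  have hB : (k : ℕ) + 1 ≤ Multiset.card ((Finset.univ.val.map l').filter (· < c)) := by
    rw [← hmapm', cardfun]
    calc (k : ℕ) + 1 = (Finset.Iic k).card := (Fin.card_Iic k).symm
      _ ≤ (Finset.univ.filter (fun i => m' i < c)).card := by
          apply Finset.card_le_card
          intro i hi
          simp only [Finset.mem_Iic] at hi
          simp only [Finset.mem_filter, Finset.mem_univ, true_and]
          exact lt_of_le_of_lt (Tuple.monotone_sort l' hi) hcon
  -- L-count = A-count
  have hsplit : 𝓛 = Finset.univ.val.map l + (𝓛 - Finset.univ.val.map l) :=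
    (add_tsub_cancel_of_le hl).symm
  have hrest : (𝓛 - Finset.univ.val.map l).filter (· < c) = 0 := by
    rw [Multiset.filter_eq_nil]
    intro x hx
    exact not_lt.2 (hmin x hx (Tuple.sort l k))
  have hL : Multiset.card (𝓛.filter (· < c)) =
      Multiset.card ((Finset.univ.val.map l).filter (· < c)) := by
    conv_lhs => rw [hsplit]
    rw [Multiset.filter_add, hrest, add_zero]
  have hBL : Multiset.card ((Finset.univ.val.map l').filter (· < c)) ≤
      Multiset.card (𝓛.filter (· < c)) :=
    Multiset.card_le_card (Multiset.filter_le_filter _ hl')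
  omega

/-- `Λ = Λ_min` iff (1) the chosen magnitudes are the `V` smallest elements of
the multiset `𝓛` (every unchosen element is at least every chosen one) and
(2) the sequence `l` has no concordant pairs (it is sorted nondecreasingly
relative to the nonincreasing probabilities). -/
theorem stmt2 (V : ℕ) (hV : 1 ≤ V) (p : Fin V → ℝ)
    (hppos : ∀ i, 0 < p i)
    (hpmono : ∀ i j : Fin V, i ≤ j → p j ≤ p i)
    (𝓛 : Multiset ℝ) (h𝓛pos : ∀ x ∈ 𝓛, (0:ℝ) < x) (hcard : V ≤ Multiset.card 𝓛)
    (g : ℝ → ℝ) (hg : StrictMono g)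
    (l : Fin V → ℝ) (hl : Finset.univ.val.map l ≤ 𝓛) :
    (∀ l' : Fin V → ℝ, Finset.univ.val.map l' ≤ 𝓛 →
        ∑ i, p i * g (l i) ≤ ∑ i, p i * g (l' i)) ↔
      ((∀ x ∈ 𝓛 - Finset.univ.val.map l, ∀ i : Fin V, l i ≤ x) ∧
       (∀ i j : Fin V, i < j → p j < p i → ¬ (l j < l i))) := by
  constructor
  · intro H
    constructor
    · -- condition (1)
      intro x hx i
      by_contra hxi
      push_neg at hxi   -- x < l i
      set l' := Function.update l i x with hl'def
      -- the multiset of l'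
      have hiu : i ∈ Finset.univ.val := Finset.mem_univ_val i
      have hrest : ∀ j ∈ Finset.univ.val.erase i, l' j = l j := by
        intro j hj
        have hne : j ≠ i := (Finset.univ.nodup.mem_erase_iff.1 hj).1
        simp [hl'def, Function.update_of_ne hne]
      have hmap' : Finset.univ.val.map l' = x ::ₘ (Finset.univ.val.erase i).map l := by
        conv_lhs => rw [← Multiset.cons_erase hiu]
        rw [Multiset.map_cons, Multiset.map_congr rfl hrest]
        simp [hl'def]
      have hmap : Finset.univ.val.map l = l i ::ₘ (Finset.univ.val.erase i).map l := by
        conv_lhs => rw [← Multiset.cons_erase hiu]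
        rw [Multiset.map_cons]
      set C := (Finset.univ.val.erase i).map l with hC
      have hxne : x ≠ l i := ne_of_lt hxi
      -- x has spare multiplicity
      have hxcount : Multiset.count x C + 1 ≤ Multiset.count x 𝓛 := by
        have h1 : 0 < Multiset.count x (𝓛 - Finset.univ.val.map l) :=
          Multiset.count_pos.2 hx
        rw [Multiset.count_sub] at h1
        have h2 : Multiset.count x (Finset.univ.val.map l) = Multiset.count x C := by
          rw [hmap, Multiset.count_cons_of_ne hxne]
        omega
      have hle' : Finset.univ.val.map l' ≤ 𝓛 := by
        rw [hmap', Multiset.le_iff_count]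
        intro y
        by_cases hy : y = x
        · subst hy
          rw [Multiset.count_cons_self]
          omega
        · rw [Multiset.count_cons_of_ne hy]
          calc Multiset.count y C ≤ Multiset.count y (Finset.univ.val.map l) := by
                rw [hmap]; exact Multiset.count_le_count_cons y _ C
            _ ≤ Multiset.count y 𝓛 := Multiset.count_le_of_le y hl
      have hH := H l' hle'
      -- compute the sums
      have e1 : ∑ j, p j * g (l j) = p i * g (l i) + ∑ j ∈ Finset.univ.erase i, p j * g (l j) :=
        (Finset.add_sum_erase _ _ (Finset.mem_univ i)).symm
      have e2 : ∑ j, p j * g (l' j) = p i * g x + ∑ j ∈ Finset.univ.erase i, p j * g (l j) := by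
        rw [← Finset.add_sum_erase _ (fun j => p j * g (l' j)) (Finset.mem_univ i)]
        congr 1
        · simp [hl'def]
        · apply Finset.sum_congr rfl
          intro j hj
          have hne : j ≠ i := (Finset.mem_erase.1 hj).1
          simp [hl'def, Function.update_of_ne hne]
      rw [e1, e2] at hH
      have hgx : g x < g (l i) := hg hxi
      nlinarith [hppos i]
    · -- condition (2)
      intro i j hij hp hlt
      set e := Equiv.swap i j with he
      set l' := l ∘ ⇑e with hl'def
      have hle' : Finset.univ.val.map l' ≤ 𝓛 := by
        rw [hl'def, map_comp_perm]; exact hl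
      have hH := H l' hle'
      have hdiff : ∑ k, (p k * g (l' k) - p k * g (l k)) =
          (p i * g (l j) + p j * g (l i)) - (p i * g (l i) + p j * g (l j)) := by
        rw [← Finset.sum_subset (Finset.subset_univ {i, j})]
        · rw [Finset.sum_pair hij.ne]
          simp [hl'def, he, Equiv.swap_apply_left, Equiv.swap_apply_right]
          ring
        · intro k _ hk
          simp only [Finset.mem_insert, Finset.mem_singleton, not_or] at hk
          simp [hl'def, he, Equiv.swap_apply_of_ne_of_ne hk.1 hk.2]
      rw [Finset.sum_sub_distrib] at hdiff
      have hgl : g (l j) < g (l i) := hg hlt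
      nlinarith
  · -- sufficiency
    rintro ⟨h1, h2⟩ l' hle'
    set σ := Tuple.sort l with hσ
    set σ' := Tuple.sort l' with hσ'
    set m := l ∘ ⇑σ with hm
    set m' := l' ∘ ⇑σ' with hm'
    -- p antivaries with g ∘ l
    have hant : Antivary p (g ∘ l) := by
      intro a b hab
      simp only [Function.comp_apply] at hab
      have hab' : l a < l b := hg.lt_iff_lt.1 hab
      rcases lt_trichotomy a b with h | h | h
      · exact hpmono a b h.le
      · exact h ▸ le_refl _
      · by_contra hcon
        push_neg at hcon
        exact h2 b a h hcon hab'
    have step1 : ∑ i, p i * g (l i) ≤ ∑ i, p i * g (m i) := by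
      have := hant.sum_mul_le_sum_mul_comp_perm (σ := σ)
      simpa [hm] using this
    have step2 : ∑ i, p i * g (m i) ≤ ∑ i, p i * g (m' i) := by
      apply Finset.sum_le_sum
      intro i _
      have hmm : m i ≤ m' i := sorted_pointwise_le hl hle' h1 i
      exact mul_le_mul_of_nonneg_left (hg.monotone hmm) (hppos i).le
    have step3 : ∑ i, p i * g (m' i) ≤ ∑ i, p i * g (l' i) := by
      have hant' : Antivary p (g ∘ m') := by
        intro a b hab
        simp only [Function.comp_apply] at hab
        have hab' : m' a < m' b := hg.lt_iff_lt.1 hab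
        have hab2 : a < b := by
          by_contra hcon
          push_neg at hcon
          exact absurd (Tuple.monotone_sort l' hcon) (not_le.2 hab')
        exact hpmono a b hab2.le
      have := hant'.sum_mul_le_sum_mul_comp_perm (σ := σ'⁻¹)
      have heq : ∀ i, m' (σ'⁻¹ i) = l' i := by
        intro i
        simp [hm']
      simpa only [Function.comp_apply, heq] using this
    exact (step1.trans step2).trans step3
end

section
/- If each rank i ≥ 1 is assigned the i-th shortest string over an alphabet of size N > 1 with minimum length l_min, then the length of the string at rank i equals ⌈log_N((1 − 1/N)·i + N^{l_min − 1})⌉. -/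
lemma geom_key (N lmin l : ℕ) (h : lmin ≤ l + 1) :
    ((N:ℤ) - 1) * ∑ k ∈ Finset.Icc lmin l, (N:ℤ)^k = (N:ℤ)^(l+1) - (N:ℤ)^lmin := by
  rw [← Finset.Ico_add_one_right_eq_Icc, Finset.sum_Ico_eq_sub _ h]
  have h1 : (∑ k ∈ Finset.range (l+1), (N:ℤ)^k) * ((N:ℤ) - 1) = (N:ℤ)^(l+1) - 1 :=
    geom_sum_mul _ _
  have h2 : (∑ k ∈ Finset.range lmin, (N:ℤ)^k) * ((N:ℤ) - 1) = (N:ℤ)^lmin - 1 :=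
    geom_sum_mul _ _
  linear_combination h1 - h2

/-- If rank `i ≥ 1` is assigned the `i`-th shortest string over an alphabet of
size `N ≥ 2` with minimum length `l_min ≥ 1` (there are `N^k` strings of each
length `k`), then the length of the string at rank `i` equals
`⌈log_N((1 − 1/N)·i + N^(l_min − 1))⌉`. -/
theorem stmt5 (N lmin i : ℕ) (hN : 2 ≤ N) (hlmin : 1 ≤ lmin) (hi : 1 ≤ i) :
    ((sInf {l : ℕ | lmin ≤ l ∧ i ≤ ∑ k ∈ Finset.Icc lmin l, N ^ k} : ℕ) : ℤ) =
      ⌈Real.logb N ((1 - 1 / (N : ℝ)) * i + (N : ℝ) ^ (lmin - 1))⌉ := by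
  set S : Set ℕ := {l : ℕ | lmin ≤ l ∧ i ≤ ∑ k ∈ Finset.Icc lmin l, N ^ k} with hSdef
  have hne : S.Nonempty := by
    refine ⟨lmin + i, Nat.le_add_right _ _, ?_⟩
    calc i ≤ 2 ^ i := (Nat.lt_two_pow_self).le
      _ ≤ N ^ (lmin + i) := le_trans (Nat.pow_le_pow_left hN i)
          (Nat.pow_le_pow_right (by omega) (by omega))
      _ ≤ ∑ k ∈ Finset.Icc lmin (lmin+i), N^k :=
          Finset.single_le_sum (fun k _ => Nat.zero_le _)
            (Finset.mem_Icc.mpr ⟨by omega, le_rfl⟩)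
  set L := sInf S with hLdef
  obtain ⟨hlminL, hiL⟩ := Nat.sInf_mem hne
  have hL1 : 1 ≤ L := le_trans hlmin hlminL
  have hNR : (1:ℝ) < N := by exact_mod_cast (by omega : 1 < N)
  have hN0 : (0:ℝ) < N := by positivity
  have hfrac : (0:ℝ) < 1 - 1/(N:ℝ) := by
    rw [sub_pos, div_lt_one hN0]; exact hNR
  have hiR : (1:ℝ) ≤ i := by exact_mod_cast hi
  set x : ℝ := (1 - 1/(N:ℝ)) * i + (N:ℝ)^(lmin-1) with hxdef
  have hx : (0:ℝ) < x := by
    have : (0:ℝ) < (1 - 1/(N:ℝ)) * i := by positivity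
    positivity
  have hpow : (N:ℝ)^lmin = (N:ℝ)^(lmin-1) * N := by
    rw [← pow_succ]; congr 1; omega
  have hxN : x * N = ((N:ℝ)-1)*i + (N:ℝ)^lmin := by
    rw [hxdef, hpow]
    field_simp
  -- upper bound
  have key1 : ((N:ℤ)-1) * i + (N:ℤ)^lmin ≤ (N:ℤ)^(L+1) := by
    have hcast : (i:ℤ) ≤ ∑ k ∈ Finset.Icc lmin L, (N:ℤ)^k := by exact_mod_cast hiL
    have hmul := mul_le_mul_of_nonneg_left hcast (show (0:ℤ) ≤ (N:ℤ)-1 by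
      have : (2:ℤ) ≤ N := by exact_mod_cast hN
      omega)
    have hg := geom_key N lmin L (by omega)
    linarith
  have keyR : ((N:ℝ)-1)*i + (N:ℝ)^lmin ≤ (N:ℝ)^(L+1) := by exact_mod_cast key1
  have hupper : x ≤ (N:ℝ)^L := by
    have h2 : x * N ≤ (N:ℝ)^L * N := by
      rw [hxN, ← pow_succ]; exact keyR
    exact le_of_mul_le_mul_right h2 hN0
  -- lower bound
  have hlower : (N:ℝ)^(L-1) < x := by
    by_cases hc : lmin ≤ L - 1
    · have hnot : L - 1 ∉ S := Nat.notMem_of_lt_sInf (by omega)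
      have hlt : ∑ k ∈ Finset.Icc lmin (L-1), N ^ k < i := by
        by_contra hcon
        exact hnot ⟨hc, by omega⟩
      have hcast : (∑ k ∈ Finset.Icc lmin (L-1), (N:ℤ)^k) + 1 ≤ (i:ℤ) := by
        exact_mod_cast hlt
      have hg := geom_key N lmin (L-1) (by omega)
      rw [show L - 1 + 1 = L by omega] at hg
      have hN2 : (2:ℤ) ≤ N := by exact_mod_cast hN
      have hmul := mul_le_mul_of_nonneg_left hcast (show (0:ℤ) ≤ (N:ℤ)-1 by omega)
      have hstrict : (N:ℤ)^L < ((N:ℤ)-1)*i + (N:ℤ)^lmin := by nlinarith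
      have hstrictR : (N:ℝ)^L < ((N:ℝ)-1)*i + (N:ℝ)^lmin := by exact_mod_cast hstrict
      have h2 : (N:ℝ)^(L-1) * N < x * N := by
        rw [hxN, show (N:ℝ)^(L-1) * N = (N:ℝ)^L by rw [← pow_succ]; congr 1; omega]
        exact hstrictR
      exact lt_of_mul_lt_mul_right h2 hN0.le
    · have hLeq : L = lmin := by omega
      rw [hLeq, hxdef]
      have : (0:ℝ) < (1 - 1/(N:ℝ)) * i := by positivity
      linarith
  symm
  rw [Int.ceil_eq_iff]
  constructor
  · rw [show ((L:ℤ):ℝ) - 1 = ((L-1 : ℕ):ℝ) by push_cast [hL1]; ring]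
    rw [← Real.rpow_natCast (N:ℝ) (L-1)] at hlower
    exact (Real.lt_logb_iff_rpow_lt hNR hx).mpr hlower
  · rw [← Real.rpow_natCast (N:ℝ) L] at hupper
    have := (Real.logb_le_iff_le_rpow hNR hx).mpr hupper
    exact_mod_cast this
end

section
/- For optimal non-singular coding (N ≥ 2, l_min = 1), the length of the code assigned to rank i equals ⌈log_N((1 − 1/N)·i + 1)⌉, which is also equal to ⌈log_N((N−1)·i + N)⌉ − 1. -/
/-!
Since `(N - 1) · ∑_{k=1}^{l} N^k + N = N^(l+1)`, the first `l` lengths provide at least `i`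
codewords exactly when `(N - 1) i + N ≤ N^(l+1)`. Hence the code length of rank `i` is
`Nat.clog N ((N - 1) i + N) - 1`, and `Nat.clog` is the ceiling of the real logarithm. Dividing
the argument by `N` lowers the logarithm by one, which turns `(N - 1) i + N` into
`(1 - 1/N) i + 1`.
-/

open Finset

theorem Nat.sub_one_mul_sum_Icc_pow_add_self (N l : ℕ) :
    (N - 1) * ∑ k ∈ Icc 1 l, N ^ k + N = N ^ (l + 1) := by
  rcases N with _ | n
  · simp
  · rw [Nat.add_sub_cancel]
    induction l with
    | zero => simp
    | succ l ih =>
      rw [sum_Icc_succ_top (by omega), mul_add, add_right_comm, ih]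
      ring

theorem Nat.le_sum_Icc_pow_iff {N : ℕ} (hN : 1 < N) (i l : ℕ) :
    i ≤ ∑ k ∈ Icc 1 l, N ^ k ↔ (N - 1) * i + N ≤ N ^ (l + 1) := by
  rw [← Nat.sub_one_mul_sum_Icc_pow_add_self, Nat.add_le_add_iff_right,
    Nat.mul_le_mul_left_iff (by omega)]

theorem Nat.sInf_setOf_le_sum_Icc_pow {N i : ℕ} (hN : 1 < N) (hi : 1 ≤ i) :
    sInf {l : ℕ | 1 ≤ l ∧ i ≤ ∑ k ∈ Icc 1 l, N ^ k} = Nat.clog N ((N - 1) * i + N) - 1 := by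
  have hclog : 1 < Nat.clog N ((N - 1) * i + N) := by
    rw [Nat.lt_clog_iff_pow_lt hN, pow_one]
    have : 0 < (N - 1) * i := Nat.mul_pos (by omega) hi
    omega
  have hset : {l : ℕ | 1 ≤ l ∧ i ≤ ∑ k ∈ Icc 1 l, N ^ k} =
      Set.Ici (Nat.clog N ((N - 1) * i + N) - 1) := by
    ext l
    simp only [Set.mem_ofPred_eq, Set.mem_Ici, Nat.le_sum_Icc_pow_iff hN,
      ← Nat.clog_le_iff_le_pow hN]
    omega
  rw [hset, csInf_Ici]

theorem Real.ceil_logb_div_base {b x : ℝ} (hb : 1 < b) (hx : x ≠ 0) :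
    ⌈logb b (x / b)⌉ = ⌈logb b x⌉ - 1 := by
  rw [logb_div hx (by positivity), logb_self_eq_one hb, Int.ceil_sub_one]

/-- For optimal non-singular coding (`N ≥ 2`, `l_min = 1`), the length of the
code assigned to rank `i` equals `⌈log_N((1 − 1/N)·i + 1)⌉`, which is also
equal to `⌈log_N((N−1)·i + N)⌉ − 1`. -/
theorem stmt7 (N i : ℕ) (hN : 2 ≤ N) (hi : 1 ≤ i) :
    ((sInf {l : ℕ | 1 ≤ l ∧ i ≤ ∑ k ∈ Finset.Icc 1 l, N ^ k} : ℕ) : ℤ) =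
      ⌈Real.logb N ((1 - 1 / (N : ℝ)) * i + 1)⌉ ∧
    ⌈Real.logb N ((1 - 1 / (N : ℝ)) * i + 1)⌉ =
      ⌈Real.logb N (((N : ℝ) - 1) * i + N)⌉ - 1 := by
  set M := (N - 1) * i + N with hM
  have hMcast : ((N : ℝ) - 1) * i + N = M := by
    simp [M, Nat.cast_sub (by omega : 1 ≤ N)]
  have hshift : ⌈Real.logb N ((1 - 1 / (N : ℝ)) * i + 1)⌉ =
      ⌈Real.logb N (((N : ℝ) - 1) * i + N)⌉ - 1 := by
    rw [← Real.ceil_logb_div_base (by exact_mod_cast hN) (by rw [hMcast]; positivity)]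
    congr 2
    field_simp
  have hceil : ⌈Real.logb N (M : ℝ)⌉ = Nat.clog N M := by
    rw [Real.ceil_logb_natCast (by positivity), Int.clog_natCast]
  have hclog : 0 < Nat.clog N M := Nat.clog_pos hN (by omega)
  refine ⟨?_, hshift⟩
  rw [Nat.sInf_setOf_le_sum_Icc_pow hN hi, ← hM, hshift, hMcast, hceil]
  omega
end

section
/- Random typing satisfies a logarithmic law of abbreviation: the length l of a word with probability p satisfies l = a·log p + b exactly, where a = (log((1−p_s)/N))^{-1} and b = a·log((1−p_s)^{l_min}/p_s). -/
open Real

theorem natCast_eq_inv_log_mul_log_pow_mul_add {x c : ℝ} (hx : log x ≠ 0) (hc : c ≠ 0) (n : ℕ) :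
    (n : ℝ) = (log x)⁻¹ * log (x ^ n * c) + (log x)⁻¹ * log c⁻¹ := by
  have hx0 : x ≠ 0 := fun h => hx (by rw [h, log_zero])
  rw [log_mul (pow_ne_zero n hx0) hc, log_pow, log_inv]
  field_simp
  ring

theorem log_div_natCast_ne_zero {q : ℝ} {N : ℕ} (hq : 0 < q) (hq1 : q < 1) (hN : 1 ≤ N) :
    log (q / N) ≠ 0 := by
  have hNpos : (1 : ℝ) ≤ N := by exact_mod_cast hN
  refine (log_neg (by positivity) ?_).ne
  rw [div_lt_one (by linarith)]
  linarith

/-- Random typing satisfies an exact logarithmic law of abbreviation: the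
length `l` of a word of probability `p = ((1−p_s)/N)^l · p_s/(1−p_s)^{l_min}`
satisfies `l = a·log p + b` with `a = (log((1−p_s)/N))⁻¹` and
`b = a·log((1−p_s)^{l_min}/p_s)`. -/
theorem stmt11 (N lmin l : ℕ) (hN : 2 ≤ N) (ps : ℝ) (h0 : 0 < ps) (h1 : ps < 1) :
    (l : ℝ) =
      (Real.log ((1 - ps) / N))⁻¹ *
          Real.log (((1 - ps) / N) ^ l * (ps / (1 - ps) ^ lmin)) +
        (Real.log ((1 - ps) / N))⁻¹ * Real.log ((1 - ps) ^ lmin / ps) := by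
  have hq : 0 < 1 - ps := by linarith
  rw [← inv_div ps]
  exact natCast_eq_inv_log_mul_log_pow_mul_add
    (log_div_natCast_ne_zero hq (by linarith) (by omega : 1 ≤ N)) (by positivity) l
end

section
/- Random typing is an optimal non-singular code: for the probability distribution on words it generates, assigning each word its own string minimizes the expected code length L = Σ p_i l_i over all non-singular codes (injective assignments of distinct strings over the same alphabet). -/
open scoped ENNReal

/-- Random typing is an optimal non-singular code: for the distribution it
induces on nonempty words over an `N`-letter alphabet (`l_min = 1`), the
identity assignment minimizes the expected code length `L = Σ p_w · l_w` over
all non-singular codes, i.e. injective assignments of distinct nonempty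
strings over the same alphabet. -/
theorem stmt12 (N : ℕ) (hN : 1 ≤ N) (ps : ℝ) (h0 : 0 < ps) (h1 : ps < 1)
    (c : {w : List (Fin N) // w ≠ []} → {w : List (Fin N) // w ≠ []})
    (hc : Function.Injective c) :
    ∑' w : {w : List (Fin N) // w ≠ []},
        ENNReal.ofReal (((1 - ps) / N) ^ w.1.length * (ps / (1 - ps)) * w.1.length) ≤
      ∑' w : {w : List (Fin N) // w ≠ []},
        ENNReal.ofReal (((1 - ps) / N) ^ w.1.length * (ps / (1 - ps)) * (c w).1.length) := by
  classical
  have hN1 : (1 : ℝ) ≤ N := by exact_mod_cast hN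
  set q : ℝ := (1 - ps) / N with hqdef
  set r : ℝ := ps / (1 - ps) with hrdef
  have hq0 : 0 ≤ q := div_nonneg (by linarith) (by linarith)
  have hq1 : q ≤ 1 := by
    rw [hqdef, div_le_one (by linarith)]; linarith
  have hr0 : 0 ≤ r := div_nonneg h0.le (by linarith)
  set P : {w : List (Fin N) // w ≠ []} → ℝ≥0∞ := fun w => ENNReal.ofReal (q ^ w.1.length * r) with hPdef
  -- expand counting measure of a natural number
  have hnat : ∀ n : ℕ, (n : ℝ≥0∞) = ∑' k : ℕ, if k < n then (1 : ℝ≥0∞) else 0 := by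
    intro n
    rw [tsum_eq_sum (s := Finset.range n)
      (by intro k hk; simp only [Finset.mem_range] at hk; simp [hk])]
    rw [Finset.sum_congr rfl (fun k hk => if_pos (Finset.mem_range.mp hk))]
    simp
  have hterm : ∀ (w : {w : List (Fin N) // w ≠ []}) (n : ℕ),
      ENNReal.ofReal (q ^ w.1.length * r * n) = ∑' k : ℕ, if k < n then P w else 0 := by
    intro w n
    have : ENNReal.ofReal (q ^ w.1.length * r * n) = P w * n := by
      rw [ENNReal.ofReal_mul (mul_nonneg (pow_nonneg hq0 _) hr0), ENNReal.ofReal_natCast]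
    rw [this, hnat n, ← ENNReal.tsum_mul_left]
    congr 1
    funext k
    by_cases h : k < n <;> simp [h]
  -- the per-level inequality
  have key : ∀ k : ℕ,
      (∑' w : {w : List (Fin N) // w ≠ []}, if (c w).1.length ≤ k then P w else 0) ≤
        ∑' w : {w : List (Fin N) // w ≠ []}, if w.1.length ≤ k then P w else 0 := by
    intro k
    have hTfin : {w : {w : List (Fin N) // w ≠ []} | w.1.length ≤ k}.Finite := by
      have hfin : {l : List (Fin N) | l.length ≤ k}.Finite := List.finite_length_le (Fin N) k
      have : {w : {w : List (Fin N) // w ≠ []} | w.1.length ≤ k} = Subtype.val ⁻¹' {l : List (Fin N) | l.length ≤ k} :=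
        rfl
      rw [this]
      exact Set.Finite.preimage (Subtype.val_injective.injOn) hfin
    have hSfin : {w : {w : List (Fin N) // w ≠ []} | (c w).1.length ≤ k}.Finite := by
      have : {w : {w : List (Fin N) // w ≠ []} | (c w).1.length ≤ k} = c ⁻¹' {w : {w : List (Fin N) // w ≠ []} | w.1.length ≤ k} := rfl
      rw [this]
      exact Set.Finite.preimage hc.injOn hTfin
    set T := hTfin.toFinset with hT
    set S := hSfin.toFinset with hS
    have hmemT : ∀ w : {w : List (Fin N) // w ≠ []}, w ∈ T ↔ w.1.length ≤ k := by
      intro w; simp [hT, Set.Finite.mem_toFinset]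
    have hmemS : ∀ w : {w : List (Fin N) // w ≠ []}, w ∈ S ↔ (c w).1.length ≤ k := by
      intro w; simp [hS, Set.Finite.mem_toFinset]
    rw [tsum_eq_sum (s := S) (by intro w hw; rw [if_neg]; exact fun h => hw ((hmemS w).mpr h)),
        tsum_eq_sum (s := T) (by intro w hw; rw [if_neg]; exact fun h => hw ((hmemT w).mpr h))]
    rw [Finset.sum_congr rfl (fun w hw => if_pos ((hmemS w).mp hw)),
        Finset.sum_congr rfl (fun w hw => if_pos ((hmemT w).mp hw))]
    -- now a pure finite rearrangement argument
    have hcardST : S.card ≤ T.card := by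
      refine Finset.card_le_card_of_injOn c (fun w hw => ?_) hc.injOn
      exact (hmemT (c w)).mpr ((hmemS w).mp hw)
    have hcard : (S \ T).card ≤ (T \ S).card := by
      have h1 := Finset.card_sdiff_add_card_inter S T
      have h2 := Finset.card_sdiff_add_card_inter T S
      rw [Finset.inter_comm] at h2
      omega
    have hSdT : ∑ w ∈ S \ T, P w ≤ (S \ T).card • ENNReal.ofReal (q ^ (k + 1) * r) := by
      refine Finset.sum_le_card_nsmul _ _ _ (fun w hw => ?_)
      have hw' : k + 1 ≤ w.1.length := by
        have hlen : ¬ w.1.length ≤ k := fun h => (Finset.mem_sdiff.mp hw).2 ((hmemT w).mpr h)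
        omega
      exact ENNReal.ofReal_le_ofReal
        (mul_le_mul_of_nonneg_right (pow_le_pow_of_le_one hq0 hq1 hw') hr0)
    have hTdS : (T \ S).card • ENNReal.ofReal (q ^ k * r) ≤ ∑ w ∈ T \ S, P w := by
      refine Finset.card_nsmul_le_sum _ _ _ (fun w hw => ?_)
      have hw' : w.1.length ≤ k := (hmemT w).mp (Finset.mem_sdiff.mp hw).1
      exact ENNReal.ofReal_le_ofReal
        (mul_le_mul_of_nonneg_right (pow_le_pow_of_le_one hq0 hq1 hw') hr0)
    have hmid : (S \ T).card • ENNReal.ofReal (q ^ (k + 1) * r) ≤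
        (T \ S).card • ENNReal.ofReal (q ^ k * r) := by
      rw [nsmul_eq_mul, nsmul_eq_mul]
      refine mul_le_mul' (by exact_mod_cast hcard) ?_
      exact ENNReal.ofReal_le_ofReal
        (mul_le_mul_of_nonneg_right (pow_le_pow_of_le_one hq0 hq1 (Nat.le_succ k)) hr0)
    calc ∑ w ∈ S, P w = ∑ w ∈ S ∩ T, P w + ∑ w ∈ S \ T, P w :=
          (Finset.sum_inter_add_sum_sdiff S T P).symm
      _ ≤ ∑ w ∈ S ∩ T, P w + ∑ w ∈ T \ S, P w := by
          exact add_le_add_right (hSdT.trans (hmid.trans hTdS)) _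
      _ = ∑ w ∈ T ∩ S, P w + ∑ w ∈ T \ S, P w := by rw [Finset.inter_comm]
      _ = ∑ w ∈ T, P w := Finset.sum_inter_add_sum_sdiff T S P
  -- splitting lemma and finiteness of the "short" part
  have hsplit : ∀ (k : ℕ) (g : {w : List (Fin N) // w ≠ []} → ℕ),
      (∑' w : {w : List (Fin N) // w ≠ []}, if k < g w then P w else 0) + (∑' w : {w : List (Fin N) // w ≠ []}, if g w ≤ k then P w else 0)
        = ∑' w : {w : List (Fin N) // w ≠ []}, P w := by
    intro k g
    rw [← ENNReal.tsum_add]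
    refine tsum_congr fun w => ?_
    by_cases h : k < g w
    · simp [h, Nat.not_le.mpr h]
    · simp [h, Nat.not_lt.mp h]
  have hbne : ∀ k : ℕ, (∑' w : {w : List (Fin N) // w ≠ []}, if w.1.length ≤ k then P w else 0) ≠ ∞ := by
    intro k
    have hTfin : {w : {w : List (Fin N) // w ≠ []} | w.1.length ≤ k}.Finite := by
      have hfin : {l : List (Fin N) | l.length ≤ k}.Finite := List.finite_length_le (Fin N) k
      exact Set.Finite.preimage (Subtype.val_injective.injOn) hfin
    rw [tsum_eq_sum (s := hTfin.toFinset)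
      (by intro w hw; rw [if_neg]; exact fun h => hw (hTfin.mem_toFinset.mpr h))]
    refine (ENNReal.sum_lt_top.mpr fun w _ => ?_).ne
    split
    · exact ENNReal.ofReal_lt_top
    · exact ENNReal.zero_lt_top
  have hL : ∀ g : {w : List (Fin N) // w ≠ []} → ℕ,
      (∑' w : {w : List (Fin N) // w ≠ []}, ENNReal.ofReal (q ^ w.1.length * r * (g w))) =
        ∑' k : ℕ, ∑' w : {w : List (Fin N) // w ≠ []}, if k < g w then P w else 0 := by
    intro g
    rw [← ENNReal.tsum_comm]
    exact tsum_congr fun w => hterm w (g w)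
  calc (∑' w : {w : List (Fin N) // w ≠ []}, ENNReal.ofReal (q ^ w.1.length * r * w.1.length))
      = ∑' k : ℕ, ∑' w : {w : List (Fin N) // w ≠ []}, if k < w.1.length then P w else 0 := hL fun w => w.1.length
    _ ≤ ∑' k : ℕ, ∑' w : {w : List (Fin N) // w ≠ []}, if k < (c w).1.length then P w else 0 := by
        refine ENNReal.tsum_le_tsum fun k => ?_
        have h1 := hsplit k fun w => w.1.length
        have h2 := hsplit k fun w => (c w).1.length
        refine (ENNReal.add_le_add_iff_right (hbne k)).mp ?_
        calc (∑' w : {w : List (Fin N) // w ≠ []}, if k < w.1.length then P w else 0)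
              + (∑' w : {w : List (Fin N) // w ≠ []}, if w.1.length ≤ k then P w else 0)
            = ∑' w : {w : List (Fin N) // w ≠ []}, P w := h1
          _ = (∑' w : {w : List (Fin N) // w ≠ []}, if k < (c w).1.length then P w else 0)
              + (∑' w : {w : List (Fin N) // w ≠ []}, if (c w).1.length ≤ k then P w else 0) := h2.symm
          _ ≤ _ := add_le_add_right (key k) _
    _ = _ := (hL fun w => (c w).1.length).symm
end

section
/- The probability of the rank-i word in random typing has the exact closed form p_i = ((1−p_s)/N)^{l_i} · p_s/(1−p_s)^{l_min}, where l_i = ⌈log_N((1−1/N)·i + N^{l_min−1})⌉ for N > 1, and this defines a probability distribution (Σ_{i=1}^∞ p_i = 1). -/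
open Finset Filter Real Topology

/-- number of strings of length between `lmin` and `l`. -/
def ffun (N lmin l : ℕ) : ℕ := ∑ k ∈ Finset.Icc lmin l, N ^ k

lemma ffun_succ (N lmin l : ℕ) (h : lmin ≤ l + 1) :
    ffun N lmin (l + 1) = ffun N lmin l + N ^ (l + 1) := by
  simp [ffun, Finset.sum_Icc_succ_top h]

lemma ffun_mono (N lmin : ℕ) {a b : ℕ} (h : a ≤ b) : ffun N lmin a ≤ ffun N lmin b :=
  Finset.sum_le_sum_of_subset (Finset.Icc_subset_Icc_right h)

lemma ffun_real (N lmin : ℕ) (hN : 2 ≤ N) : ∀ l : ℕ, lmin ≤ l →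
    (ffun N lmin l : ℝ) * ((N : ℝ) - 1) = (N : ℝ) ^ (l + 1) - (N : ℝ) ^ lmin := by
  intro l hl
  induction l with
  | zero =>
    interval_cases lmin
    simp [ffun]
  | succ n ih =>
    rcases Nat.lt_or_ge n lmin with h | h
    · have : lmin = n + 1 := le_antisymm hl h
      subst this
      simp [ffun]; ring
    · rw [ffun_succ _ _ _ hl]
      push_cast
      rw [add_mul, ih h]
      ring

lemma mem_iff_real (N lmin : ℕ) (hN : 2 ≤ N) (hlmin : 1 ≤ lmin) {l : ℕ} (hl : lmin ≤ l)
    (i : ℕ) :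
    i ≤ ffun N lmin l ↔
      (1 - 1 / (N : ℝ)) * i + (N : ℝ) ^ (lmin - 1) ≤ (N : ℝ) ^ l := by
  have hN0 : (0:ℝ) < N := by positivity
  have hN1 : (1:ℝ) < N := by exact_mod_cast hN
  have hkey := ffun_real N lmin hN l hl
  have hpow : (N : ℝ) ^ (lmin - 1) * N = (N : ℝ) ^ lmin := by
    rw [← pow_succ]
    congr 1
    omega
  rw [← Nat.cast_le (α := ℝ)]
  constructor
  · intro h
    have h2 : (i : ℝ) * ((N:ℝ) - 1) ≤ (N : ℝ) ^ (l + 1) - (N : ℝ) ^ lmin := by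
      rw [← hkey]
      exact mul_le_mul_of_nonneg_right h (by linarith)
    rw [← sub_nonneg]
    rw [← sub_nonneg] at h2
    have := div_nonneg h2 hN0.le
    calc (0:ℝ) ≤ ((N:ℝ) ^ (l+1) - (N:ℝ)^lmin - i * ((N:ℝ)-1)) / N := this
      _ = (N:ℝ)^l - ((1 - 1/(N:ℝ)) * i + (N:ℝ)^(lmin-1)) := by
          field_simp
          rw [← hpow]
          ring
  · intro h
    have h2 : (i : ℝ) * ((N:ℝ) - 1) ≤ (N : ℝ) ^ (l + 1) - (N : ℝ) ^ lmin := by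
      rw [← sub_nonneg]
      rw [← sub_nonneg] at h
      have := mul_nonneg h hN0.le
      calc (0:ℝ) ≤ ((N:ℝ)^l - ((1 - 1/(N:ℝ)) * i + (N:ℝ)^(lmin-1))) * N := this
        _ = (N:ℝ) ^ (l+1) - (N:ℝ)^lmin - i * ((N:ℝ)-1) := by
            field_simp
            rw [← hpow]
            ring
    rw [← hkey] at h2
    exact le_of_mul_le_mul_right h2 (by linarith)

lemma part1 (N lmin : ℕ) (hN : 2 ≤ N) (hlmin : 1 ≤ lmin) (i : ℕ) (hi : 1 ≤ i) :
    sInf {l : ℕ | lmin ≤ l ∧ i ≤ ffun N lmin l} =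
      (⌈Real.logb N ((1 - 1 / (N : ℝ)) * i + (N : ℝ) ^ (lmin - 1))⌉).toNat := by
  have hN0 : (0:ℝ) < N := by positivity
  have hN1 : (1:ℝ) < N := by exact_mod_cast hN
  set x : ℝ := (1 - 1 / (N : ℝ)) * i + (N : ℝ) ^ (lmin - 1) with hx
  have hxgt : (N : ℝ) ^ (lmin - 1) < x := by
    have h1 : (0:ℝ) < 1 - 1 / N := by
      rw [sub_pos, div_lt_one hN0]; exact hN1
    have h2 : (1:ℝ) ≤ (i:ℝ) := by exact_mod_cast hi
    have h3 : (0:ℝ) < (1 - 1/(N:ℝ)) * i := mul_pos h1 (by linarith)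
    rw [hx]
    linarith
  have hx0 : 0 < x := lt_trans (by positivity) hxgt
  -- the ceiling is at least lmin
  have hceil_ge : (lmin : ℤ) ≤ ⌈Real.logb N x⌉ := by
    have hlog : ((lmin - 1 : ℕ) : ℝ) < Real.logb N x := by
      rw [Real.lt_logb_iff_rpow_lt hN1 hx0, Real.rpow_natCast]
      exact hxgt
    have := Int.lt_ceil.mpr hlog
    omega
  set c : ℕ := (⌈Real.logb N x⌉).toNat with hc
  have hcz : (c : ℤ) = ⌈Real.logb N x⌉ := Int.toNat_of_nonneg (by omega)
  have hmem_iff : ∀ l : ℕ, lmin ≤ l → (i ≤ ffun N lmin l ↔ c ≤ l) := by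
    intro l hl
    rw [mem_iff_real N lmin hN hlmin hl, ← hx]
    constructor
    · intro h
      have : Real.logb N x ≤ (l : ℝ) := by
        rw [Real.logb_le_iff_le_rpow hN1 hx0, Real.rpow_natCast]
        exact h
      have h2 : ⌈Real.logb N x⌉ ≤ (l : ℤ) := Int.ceil_le.mpr (by exact_mod_cast this)
      omega
    · intro h
      have h2 : Real.logb N x ≤ (c : ℝ) := by
        have h4 := Int.le_ceil (Real.logb N x)
        rw [← hcz] at h4
        exact_mod_cast h4
      have h3 : x ≤ (N:ℝ) ^ c := by
        rw [← Real.rpow_natCast, ← Real.logb_le_iff_le_rpow hN1 hx0]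
        exact h2
      calc x ≤ (N:ℝ)^c := h3
        _ ≤ (N:ℝ)^l := by
          apply pow_le_pow_right₀ (by linarith) h
  have hcmem : c ∈ {l : ℕ | lmin ≤ l ∧ i ≤ ffun N lmin l} := by
    have hcl : lmin ≤ c := by omega
    exact ⟨hcl, (hmem_iff c hcl).mpr le_rfl⟩
  refine le_antisymm (Nat.sInf_le hcmem) ?_
  have hne : {l : ℕ | lmin ≤ l ∧ i ≤ ffun N lmin l}.Nonempty := ⟨c, hcmem⟩
  obtain ⟨h1, h2⟩ := Nat.sInf_mem hne
  exact (hmem_iff _ h1).mp h2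

lemma Aval (N lmin : ℕ) (m i : ℕ) (hm : lmin ≤ m)
    (h1 : ffun N lmin (m - 1) < i) (h2 : i ≤ ffun N lmin m) :
    sInf {l : ℕ | lmin ≤ l ∧ i ≤ ffun N lmin l} = m := by
  have hmem : m ∈ {l : ℕ | lmin ≤ l ∧ i ≤ ffun N lmin l} := ⟨hm, h2⟩
  refine le_antisymm (Nat.sInf_le hmem) ?_
  obtain ⟨ha, hb⟩ := Nat.sInf_mem (⟨m, hmem⟩ :
    {l : ℕ | lmin ≤ l ∧ i ≤ ffun N lmin l}.Nonempty)
  by_contra hlt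
  push_neg at hlt
  have : ffun N lmin (sInf {l : ℕ | lmin ≤ l ∧ i ≤ ffun N lmin l}) ≤ ffun N lmin (m-1) :=
    ffun_mono N lmin (by omega)
  omega

lemma ffun_at_lmin (N lmin : ℕ) (hlmin : 1 ≤ lmin) : ffun N lmin lmin = N ^ lmin := by
  simp [ffun]

lemma ffun_pred (N lmin : ℕ) (hlmin : 1 ≤ lmin) : ffun N lmin (lmin - 1) = 0 := by
  have : Finset.Icc lmin (lmin - 1) = ∅ := by
    apply Finset.Icc_eq_empty
    omega
  simp [ffun, this]

lemma sum_T (N lmin : ℕ) (hN : 2 ≤ N) (hlmin : 1 ≤ lmin) (q : ℝ) : ∀ d : ℕ,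
    ∑ i ∈ Finset.Ioc 0 (ffun N lmin (lmin + d)),
        q ^ (sInf {l : ℕ | lmin ≤ l ∧ i ≤ ffun N lmin l})
      = ∑ m ∈ Finset.Icc lmin (lmin + d), (N : ℝ) ^ m * q ^ m := by
  intro d
  induction d with
  | zero =>
    simp only [Nat.add_zero, Finset.Icc_self, Finset.sum_singleton]
    have hval : ∀ i ∈ Finset.Ioc 0 (ffun N lmin lmin),
        q ^ (sInf {l : ℕ | lmin ≤ l ∧ i ≤ ffun N lmin l}) = q ^ lmin := by
      intro i hi
      rw [Finset.mem_Ioc] at hi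
      rw [Aval N lmin lmin i le_rfl (by rw [ffun_pred N lmin hlmin]; omega) hi.2]
    rw [Finset.sum_congr rfl hval, Finset.sum_const, Nat.card_Ioc, Nat.sub_zero,
      ffun_at_lmin N lmin hlmin, nsmul_eq_mul]
    push_cast
    ring
  | succ d ih =>
    have hstep : lmin ≤ lmin + d + 1 := by omega
    have hmono : ffun N lmin (lmin + d) ≤ ffun N lmin (lmin + d + 1) :=
      ffun_mono N lmin (by omega)
    rw [show lmin + (d+1) = lmin + d + 1 by omega,
      ← Finset.sum_Ioc_consecutive _ (Nat.zero_le _) hmono,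
      Finset.sum_Icc_succ_top hstep, ih]
    congr 1
    have hval : ∀ i ∈ Finset.Ioc (ffun N lmin (lmin + d)) (ffun N lmin (lmin + d + 1)),
        q ^ (sInf {l : ℕ | lmin ≤ l ∧ i ≤ ffun N lmin l}) = q ^ (lmin + d + 1) := by
      intro i hi
      rw [Finset.mem_Ioc] at hi
      rw [Aval N lmin (lmin + d + 1) i (by omega)
        (by simpa using hi.1) hi.2]
    rw [Finset.sum_congr rfl hval, Finset.sum_const, Nat.card_Ioc,
      ffun_succ N lmin _ hstep, nsmul_eq_mul]
    push_cast [Nat.add_sub_cancel_left]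
    ring

lemma sum_shift (h : ℕ → ℝ) (n : ℕ) :
    ∑ i ∈ Finset.range n, h (i + 1) = ∑ i ∈ Finset.Ioc 0 n, h i := by
  induction n with
  | zero => simp
  | succ n ih => rw [Finset.sum_range_succ, ih, Finset.sum_Ioc_succ_top (Nat.zero_le _)]

/-- Exact closed form for the rank-probability relation of random typing:
the rank-`i` word has length `l_i = ⌈log_N((1−1/N)·i + N^{l_min−1})⌉` (the
length of the `i`-th shortest string), its probability is
`p_i = ((1−p_s)/N)^{l_i} · p_s/(1−p_s)^{l_min}`, and these probabilities sum
to 1 over all ranks `i ≥ 1`. -/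
theorem stmt13 (N lmin : ℕ) (hN : 2 ≤ N) (hlmin : 1 ≤ lmin)
    (ps : ℝ) (h0 : 0 < ps) (h1 : ps < 1) :
    (∀ i : ℕ, 1 ≤ i →
      sInf {l : ℕ | lmin ≤ l ∧ i ≤ ∑ k ∈ Finset.Icc lmin l, N ^ k} =
        (⌈Real.logb N ((1 - 1 / (N : ℝ)) * i + (N : ℝ) ^ (lmin - 1))⌉).toNat) ∧
    ∑' i : ℕ,
        ((1 - ps) / N) ^
            (⌈Real.logb N ((1 - 1 / (N : ℝ)) * (i + 1) + (N : ℝ) ^ (lmin - 1))⌉).toNat *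
          (ps / (1 - ps) ^ lmin) = 1 := by
  have hN0 : (0:ℝ) < N := by positivity
  have hr0 : (0:ℝ) < 1 - ps := by linarith
  have hr1 : (1 - ps : ℝ) < 1 := by linarith
  constructor
  · intro i hi
    exact part1 N lmin hN hlmin i hi
  · set q : ℝ := (1 - ps) / N with hq
    set c : ℝ := ps / (1 - ps) ^ lmin with hc
    set g : ℕ → ℝ := fun i =>
      q ^ (sInf {l : ℕ | lmin ≤ l ∧ i + 1 ≤ ffun N lmin l}) * c with hg
    have hgeq : ∀ i : ℕ,
        ((1 - ps) / N) ^
            (⌈Real.logb N ((1 - 1 / (N : ℝ)) * (i + 1) + (N : ℝ) ^ (lmin - 1))⌉).toNat *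
          (ps / (1 - ps) ^ lmin) = g i := by
      intro i
      have h := part1 N lmin hN hlmin (i + 1) (by omega)
      push_cast at h
      rw [hg]
      simp only []
      rw [← h]
    rw [tsum_congr hgeq]
    have hq0 : 0 ≤ q := by positivity
    have hc0 : 0 ≤ c := by positivity
    have hgnn : ∀ i, 0 ≤ g i := fun i => mul_nonneg (pow_nonneg hq0 _) hc0
    set P : ℕ → ℝ := fun n => ∑ i ∈ Finset.range n, g i with hP
    have hPmono : Monotone P := by
      apply monotone_nat_of_le_succ
      intro n
      rw [hP]
      simp only [Finset.sum_range_succ]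
      have := hgnn n
      linarith
    -- value of P along the subsequence
    have hPval : ∀ d : ℕ, P (ffun N lmin (lmin + d)) = 1 - (1 - ps) ^ (d + 1) := by
      intro d
      have h1' : P (ffun N lmin (lmin + d)) =
          ∑ i ∈ Finset.Ioc 0 (ffun N lmin (lmin + d)),
            q ^ (sInf {l : ℕ | lmin ≤ l ∧ i ≤ ffun N lmin l}) * c := by
        rw [hP]
        exact sum_shift (fun i => q ^ (sInf {l : ℕ | lmin ≤ l ∧ i ≤ ffun N lmin l}) * c) _
      rw [h1', ← Finset.sum_mul, sum_T N lmin hN hlmin q d]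
      have hNq : ∀ m : ℕ, (N:ℝ) ^ m * q ^ m = (1 - ps) ^ m := by
        intro m
        rw [← mul_pow, hq, mul_div_cancel₀ _ (ne_of_gt hN0)]
      rw [Finset.sum_congr rfl (fun m _ => hNq m)]
      rw [show Finset.Icc lmin (lmin + d) = Finset.Ico lmin (lmin + d + 1) from
        (Finset.Ico_add_one_right_eq_Icc _ _).symm]
      rw [Finset.sum_Ico_eq_sum_range]
      simp only [Nat.add_sub_cancel_left, show lmin + d + 1 - lmin = d + 1 by omega]
      have : ∀ i : ℕ, (1 - ps) ^ (lmin + i) = (1 - ps) ^ lmin * (1 - ps) ^ i := fun i =>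
        pow_add _ _ _
      rw [Finset.sum_congr rfl (fun i _ => this i), ← Finset.mul_sum,
        geom_sum_eq (by linarith : (1 - ps : ℝ) ≠ 1), hc]
      have hps : (1 - ps : ℝ) ^ lmin ≠ 0 := by positivity
      have hps0 : ps ≠ 0 := ne_of_gt h0
      field_simp
      linear_combination (1 - (1 - ps) ^ d + ps * (1 - ps) ^ d) * mul_inv_cancel₀ hps0
    -- the subsequence tends to atTop
    have hφ : Tendsto (fun d => ffun N lmin (lmin + d)) atTop atTop := by
      apply tendsto_atTop_mono _ tendsto_id
      intro d
      have hcard : (Finset.Icc lmin (lmin + d)).card • 1 ≤ ∑ k ∈ Finset.Icc lmin (lmin + d), N ^ k := by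
        apply Finset.card_nsmul_le_sum
        intro x _
        exact Nat.one_le_pow _ _ (by omega)
      rw [Nat.card_Icc] at hcard
      simp only [smul_eq_mul, mul_one] at hcard
      have : lmin + d + 1 - lmin = d + 1 := by omega
      rw [this] at hcard
      calc d ≤ d + 1 := Nat.le_succ d
        _ ≤ ffun N lmin (lmin + d) := hcard
    -- P along the subsequence tends to 1
    have htend : Tendsto (fun d => P (ffun N lmin (lmin + d))) atTop (𝓝 1) := by
      simp only [hPval]
      have h2 : Tendsto (fun d : ℕ => (1 - ps) ^ (d + 1)) atTop (𝓝 0) :=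
        (tendsto_pow_atTop_nhds_zero_of_lt_one hr0.le hr1).comp (tendsto_add_atTop_nat 1)
      have h3 := Tendsto.sub (tendsto_const_nhds : Tendsto (fun _ : ℕ => (1:ℝ)) atTop (𝓝 1)) h2
      simpa using h3
    have hPlim : Tendsto P atTop (𝓝 1) := by
      rcases tendsto_of_monotone hPmono with htop | ⟨l, hl⟩
      · exact absurd htend (not_tendsto_nhds_of_tendsto_atTop (htop.comp hφ) 1)
      · have : l = 1 := tendsto_nhds_unique (hl.comp hφ) htend
        rwa [this] at hl
    exact ((hasSum_iff_tendsto_nat_of_nonneg hgnn 1).mpr hPlim).tsum_eq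
end

section
/- Among distributions p on {1,...,V} with p_1 ≥ ... ≥ p_V fixed and code lengths drawn from the multiset of all nonempty string lengths over an N-letter alphabet, the minimum expected length satisfies L_min = Σ_{i=1}^V p_i·⌈log_N((1−1/N)i + 1)⌉ for N ≥ 2. -/
open Finset

/-- Number of nonempty strings over an `N`-ary alphabet of length at most `l`. -/
def Scount (N l : ℕ) : ℕ := ∑ k ∈ Finset.range l, N ^ (k + 1)

lemma Scount_zero (N : ℕ) : Scount N 0 = 0 := by simp [Scount]

lemma Scount_succ (N l : ℕ) : Scount N (l + 1) = Scount N l + N ^ (l + 1) := by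
  simp [Scount, Finset.sum_range_succ]

lemma Scount_mono (N : ℕ) : Monotone (Scount N) := by
  intro a b hab
  exact Finset.sum_le_sum_of_subset (Finset.range_subset_range.2 hab)

lemma le_Scount (N l : ℕ) (hN : 1 ≤ N) : l ≤ Scount N l := by
  induction l with
  | zero => simp [Scount]
  | succ l ih =>
    rw [Scount_succ]
    have : 1 ≤ N ^ (l + 1) := Nat.one_le_pow _ _ hN
    omega

/-- The optimal code length for the `i`-th (0-indexed) most probable type. -/
noncomputable def ell (N i : ℕ) : ℕ := sInf {l | i < Scount N l}

lemma ell_spec (N i : ℕ) (hN : 1 ≤ N) : i < Scount N (ell N i) := by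
  have hne : {l | i < Scount N l}.Nonempty :=
    ⟨i + 1, lt_of_lt_of_le (Nat.lt_succ_self i) (le_Scount N (i+1) hN)⟩
  exact Nat.sInf_mem hne

lemma ell_le (N i l : ℕ) (h : i < Scount N l) : ell N i ≤ l := Nat.sInf_le h

lemma ell_pos (N i : ℕ) (hN : 1 ≤ N) : 1 ≤ ell N i := by
  by_contra h
  have h0 : ell N i = 0 := by omega
  have := ell_spec N i hN
  rw [h0, Scount_zero] at this
  omega

lemma Scount_ell_pred_le (N i : ℕ) (hN : 1 ≤ N) : Scount N (ell N i - 1) ≤ i := by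
  by_contra h
  push_neg at h
  have := ell_le N i _ h
  have := ell_pos N i hN
  omega

lemma ell_le_iff (N i l : ℕ) (hN : 1 ≤ N) : ell N i ≤ l ↔ i < Scount N l := by
  constructor
  · intro h
    exact lt_of_lt_of_le (ell_spec N i hN) (Scount_mono N h)
  · exact ell_le N i l
/-- Value of a word, little-endian base `N`. -/
def wval {N : ℕ} : List (Fin N) → ℕ
  | [] => 0
  | a :: w => a.val + N * wval w

lemma wval_lt {N : ℕ} (hN : 1 ≤ N) : ∀ w : List (Fin N), wval w < N ^ w.length := by
  intro w
  induction w with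
  | nil => simp [wval]
  | cons a w ih =>
    have ha : a.val < N := a.isLt
    have h1 : a.val + N * wval w < N * (wval w + 1) := by
      have h : N * (wval w + 1) = N * wval w + N := Nat.mul_succ N (wval w)
      omega
    have h2 : N * (wval w + 1) ≤ N * N ^ w.length := by
      exact Nat.mul_le_mul_left N ih
    calc wval (a :: w) = a.val + N * wval w := rfl
      _ < N * (wval w + 1) := h1
      _ ≤ N * N ^ w.length := h2
      _ = N ^ (a :: w).length := by rw [List.length_cons, pow_succ, Nat.mul_comm]

lemma wval_inj {N : ℕ} : ∀ w₁ w₂ : List (Fin N),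
    w₁.length = w₂.length → wval w₁ = wval w₂ → w₁ = w₂ := by
  intro w₁
  induction w₁ with
  | nil => intro w₂ h _; exact (List.eq_nil_of_length_eq_zero h.symm).symm
  | cons a w ih =>
    intro w₂ hlen hval
    cases w₂ with
    | nil => simp at hlen
    | cons b w' =>
      have hN : 0 < N := a.pos
      have hv : a.val + N * wval w = b.val + N * wval w' := hval
      have hmod : a.val = b.val := by
        have h1 : (a.val + N * wval w) % N = a.val := by
          rw [Nat.add_mul_mod_self_left]
          exact Nat.mod_eq_of_lt a.isLt
        have h2 : (b.val + N * wval w') % N = b.val := by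
          rw [Nat.add_mul_mod_self_left]
          exact Nat.mod_eq_of_lt b.isLt
        rw [← h1, ← h2, hv]
      have hW : wval w = wval w' := by
        have : N * wval w = N * wval w' := by omega
        exact Nat.eq_of_mul_eq_mul_left hN this
      have : w = w' := ih w' (by simpa using hlen) hW
      simp [Fin.ext_iff, hmod, this]

/-- Fixed-length base-`N` encoding of a natural number. -/
def enc (N : ℕ) (hN : 0 < N) : ℕ → ℕ → List (Fin N)
  | 0, _ => []
  | (l + 1), j => ⟨j % N, Nat.mod_lt j hN⟩ :: enc N hN l (j / N)

lemma enc_length (N : ℕ) (hN : 0 < N) : ∀ l j, (enc N hN l j).length = l := by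
  intro l
  induction l with
  | zero => intro j; rfl
  | succ l ih => intro j; simp [enc, ih]

lemma wval_enc (N : ℕ) (hN : 0 < N) : ∀ l j, j < N ^ l → wval (enc N hN l j) = j := by
  intro l
  induction l with
  | zero =>
    intro j hj
    have : j = 0 := by simpa using hj
    subst this; rfl
  | succ l ih =>
    intro j hj
    have hdiv : j / N < N ^ l := by
      rw [Nat.div_lt_iff_lt_mul hN]
      calc j < N ^ (l + 1) := hj
        _ = N ^ l * N := by rw [pow_succ]
    have : wval (enc N hN (l+1) j) = j % N + N * (j / N) := by
      simp [enc, wval, ih _ hdiv]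
    rw [this, Nat.mod_add_div]
/-- The optimal codeword for type `i` (0-indexed). -/
noncomputable def word (N : ℕ) (hN : 0 < N) (i : ℕ) : List (Fin N) :=
  enc N hN (ell N i) (i - Scount N (ell N i - 1))

/-- Decode a word back to a natural number. -/
def decode (N : ℕ) (w : List (Fin N)) : ℕ := Scount N (w.length - 1) + wval w

lemma word_length (N : ℕ) (hN : 0 < N) (i : ℕ) : (word N hN i).length = ell N i :=
  enc_length N hN _ _

lemma word_ne_nil (N : ℕ) (hN : 0 < N) (i : ℕ) : word N hN i ≠ [] := by
  intro h
  have h1 := word_length N hN i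
  rw [h] at h1
  have h2 := ell_pos N i hN
  simp at h1
  omega

lemma sub_lt_pow (N i : ℕ) (hN : 0 < N) : i - Scount N (ell N i - 1) < N ^ (ell N i) := by
  have h1 := ell_spec N i hN
  have h2 := Scount_ell_pred_le N i hN
  have h3 := ell_pos N i hN
  have h4 : Scount N (ell N i) = Scount N (ell N i - 1) + N ^ (ell N i) := by
    have : ell N i - 1 + 1 = ell N i := by omega
    rw [← this, Scount_succ, this]
  omega

lemma decode_word (N : ℕ) (hN : 0 < N) (i : ℕ) : decode N (word N hN i) = i := by
  have h2 := Scount_ell_pred_le N i hN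
  rw [decode, word_length, word, wval_enc N hN _ _ (sub_lt_pow N i hN)]
  omega

lemma decode_lt (N : ℕ) (w : List (Fin N)) (hw : w ≠ []) (hN : 0 < N) :
    decode N w < Scount N w.length := by
  have hl : 1 ≤ w.length := List.length_pos_iff.2 hw
  have h4 : Scount N w.length = Scount N (w.length - 1) + N ^ w.length := by
    have h : w.length - 1 + 1 = w.length := by omega
    rw [← h, Scount_succ, h]
  have := wval_lt (by omega : 1 ≤ N) w
  rw [decode]
  omega

lemma Scount_le_decode (N : ℕ) (w : List (Fin N)) :
    Scount N (w.length - 1) ≤ decode N w := Nat.le_add_right _ _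

lemma decode_inj (N : ℕ) (hN : 0 < N) (w₁ w₂ : List (Fin N)) (h1 : w₁ ≠ []) (h2 : w₂ ≠ [])
    (h : decode N w₁ = decode N w₂) : w₁ = w₂ := by
  have hlen : w₁.length = w₂.length := by
    by_contra hne
    rcases Nat.lt_or_ge w₁.length w₂.length with hlt | hge
    · have a1 := decode_lt N w₁ h1 hN
      have a2 := Scount_le_decode N w₂
      have a3 : Scount N w₁.length ≤ Scount N (w₂.length - 1) := Scount_mono N (by omega)
      omega
    · have a1 := decode_lt N w₂ h2 hN
      have a2 := Scount_le_decode N w₁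
      have a3 : Scount N w₂.length ≤ Scount N (w₁.length - 1) :=
        Scount_mono N (by omega)
      omega
  have hv : wval w₁ = wval w₂ := by
    rw [decode, decode, hlen] at h
    omega
  exact wval_inj w₁ w₂ hlen hv
lemma Scount_identity (N l : ℕ) (hN : 1 ≤ N) : (N - 1) * Scount N l + N = N ^ (l + 1) := by
  induction l with
  | zero => simp [Scount]
  | succ l ih =>
    have h2 : (N - 1) * Scount N (l + 1) + N
        = ((N - 1) * Scount N l + N) + (N - 1) * N ^ (l + 1) := by
      rw [Scount_succ]; ring
    rw [h2, ih]
    have h3 : N ^ (l + 1) + (N - 1) * N ^ (l + 1) = (1 + (N - 1)) * N ^ (l + 1) := by ring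
    rw [h3]
    have hN1 : 1 + (N - 1) = N := by omega
    rw [hN1, ← pow_succ']

lemma lt_Scount_iff (N i l : ℕ) (hN : 2 ≤ N) :
    i < Scount N l ↔ (N - 1) * (i + 1) + N ≤ N ^ (l + 1) := by
  have hid := Scount_identity N l (by omega)
  constructor
  · intro h
    have : (N - 1) * (i + 1) ≤ (N - 1) * Scount N l := Nat.mul_le_mul_left _ (by omega)
    omega
  · intro h
    have h2 : (N - 1) * (i + 1) ≤ (N - 1) * Scount N l := by omega
    have := Nat.le_of_mul_le_mul_left h2 (by omega : 0 < N - 1)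
    omega

lemma lt_Scount_iff_real (N i l : ℕ) (hN : 2 ≤ N) :
    i < Scount N l ↔ (1 - 1 / (N : ℝ)) * ((i : ℝ) + 1) + 1 ≤ (N : ℝ) ^ l := by
  rw [lt_Scount_iff N i l hN]
  have hNpos : (0 : ℝ) < (N : ℝ) := by positivity
  have hNne : (N : ℝ) ≠ 0 := ne_of_gt hNpos
  constructor
  · intro h
    have hcast : ((N : ℝ) - 1) * ((i : ℝ) + 1) + N ≤ (N : ℝ) ^ (l + 1) := by
      have hc : (((N - 1) * (i + 1) + N : ℕ) : ℝ) ≤ ((N ^ (l + 1) : ℕ) : ℝ) := by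
        exact_mod_cast h
      push_cast [Nat.cast_sub (by omega : 1 ≤ N)] at hc
      linarith
    rw [← mul_le_mul_iff_right₀ hNpos]
    calc (N:ℝ) * ((1 - 1 / N) * (i + 1) + 1) = ((N:ℝ) - 1) * (i + 1) + N := by
          field_simp
      _ ≤ (N : ℝ) ^ (l + 1) := hcast
      _ = N * (N : ℝ) ^ l := by rw [pow_succ]; ring
  · intro h
    have h2 : ((N : ℝ) - 1) * ((i : ℝ) + 1) + N ≤ (N : ℝ) ^ (l + 1) := by
      calc ((N:ℝ) - 1) * (i + 1) + N = (N:ℝ) * ((1 - 1 / N) * (i + 1) + 1) := by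
            field_simp
        _ ≤ (N:ℝ) * (N : ℝ) ^ l := by
            exact mul_le_mul_of_nonneg_left h (le_of_lt hNpos)
        _ = (N : ℝ) ^ (l + 1) := by rw [pow_succ]; ring
    have hc : (((N - 1) * (i + 1) + N : ℕ) : ℝ) ≤ ((N ^ (l + 1) : ℕ) : ℝ) := by
      push_cast [Nat.cast_sub (by omega : 1 ≤ N)]
      linarith
    exact_mod_cast hc

lemma ell_eq_ceil (N i : ℕ) (hN : 2 ≤ N) :
    ((ell N i : ℕ) : ℤ) = ⌈Real.logb N ((1 - 1 / (N : ℝ)) * ((i : ℝ) + 1) + 1)⌉ := by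
  set x : ℝ := (1 - 1 / (N : ℝ)) * ((i : ℝ) + 1) + 1 with hx
  have hb : (1 : ℝ) < N := by exact_mod_cast (by omega : 1 < N)
  have hxpos : 0 < x := by
    have h1 : (0:ℝ) < 1 - 1 / N := by
      rw [sub_pos]
      rw [div_lt_one (by positivity)]
      exact hb
    have h2 : (0:ℝ) < (i:ℝ) + 1 := by positivity
    positivity
  have hl1 := ell_pos N i (by omega)
  have key1 : i < Scount N (ell N i) := ell_spec N i (by omega)
  have key2 : Scount N (ell N i - 1) ≤ i := Scount_ell_pred_le N i (by omega)
  have hup : x ≤ (N : ℝ) ^ (ell N i) := (lt_Scount_iff_real N i _ hN).1 key1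
  have hlow : (N : ℝ) ^ (ell N i - 1) < x := by
    by_contra hcon
    push_neg at hcon
    have := (lt_Scount_iff_real N i (ell N i - 1) hN).2 hcon
    omega
  symm
  rw [Int.ceil_eq_iff]
  constructor
  · rw [Real.lt_logb_iff_rpow_lt hb hxpos]
    have hcast : ((ell N i : ℤ) : ℝ) - 1 = ((ell N i - 1 : ℕ) : ℝ) := by
      push_cast [Nat.cast_sub hl1]
      ring
    rw [hcast, Real.rpow_natCast]
    exact hlow
  · rw [Real.logb_le_iff_le_rpow hb hxpos]
    rw [show (((ell N i : ℤ) : ℝ)) = ((ell N i : ℕ) : ℝ) by push_cast; rfl]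
    rw [Real.rpow_natCast]
    exact hup
lemma sum_le_head {V : ℕ} (p : Fin V → ℝ) (hppos : ∀ i, 0 < p i)
    (hpmono : ∀ i j : Fin V, i ≤ j → p j ≤ p i) :
    ∀ (m : ℕ) (A : Finset (Fin V)), A.card ≤ m →
      ∑ i ∈ A, p i ≤ ∑ i ∈ Finset.univ.filter (fun i => i.val < m), p i := by
  intro m
  induction m with
  | zero =>
    intro A hA
    have hA0 : A = ∅ := Finset.card_eq_zero.1 (by omega)
    subst hA0
    simp only [Finset.sum_empty]
    exact Finset.sum_nonneg fun i _ => (hppos i).le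
  | succ m ih =>
    intro A hA
    by_cases hsub : A ⊆ Finset.univ.filter (fun i => i.val < m + 1)
    · exact Finset.sum_le_sum_of_subset_of_nonneg hsub (fun i _ _ => (hppos i).le)
    · rw [Finset.subset_iff] at hsub
      push_neg at hsub
      obtain ⟨a, haA, ha⟩ := hsub
      have ha' : m + 1 ≤ a.val := by
        by_contra hc
        exact ha (Finset.mem_filter.2 ⟨Finset.mem_univ a, by omega⟩)
      have hm : m < V := lt_of_lt_of_le (by omega) (le_of_lt a.isLt)
      have hAne : A.Nonempty := ⟨a, haA⟩
      set b := A.max' hAne with hb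
      have hbA : b ∈ A := A.max'_mem _
      have hab : a ≤ b := A.le_max' a haA
      have hbv : m + 1 ≤ b.val := le_trans ha' hab
      have hcard : (A.erase b).card ≤ m := by
        rw [Finset.card_erase_of_mem hbA]; omega
      have hIH := ih (A.erase b) hcard
      have hsum : ∑ i ∈ A.erase b, p i + p b = ∑ i ∈ A, p i :=
        Finset.sum_erase_add A p hbA
      have hfil : Finset.univ.filter (fun i : Fin V => i.val < m + 1)
          = insert ⟨m, hm⟩ (Finset.univ.filter (fun i : Fin V => i.val < m)) := by
        ext j
        simp only [Finset.mem_filter, Finset.mem_univ, true_and, Finset.mem_insert,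
          Fin.ext_iff]
        omega
      rw [hfil, Finset.sum_insert (by simp)]
      have hpb : p b ≤ p ⟨m, hm⟩ := hpmono ⟨m, hm⟩ b (by
        rw [Fin.le_def]; simp; omega)
      linarith

lemma card_short_le {V N : ℕ} (hN : 0 < N) (c : Fin V → {w : List (Fin N) // w ≠ []})
    (hc : Function.Injective c) (t : ℕ) :
    (Finset.univ.filter (fun i : Fin V => (c i).1.length ≤ t)).card ≤ Scount N t := by
  have hmaps : ∀ i ∈ Finset.univ.filter (fun i : Fin V => (c i).1.length ≤ t),
      decode N (c i).1 ∈ Finset.range (Scount N t) := by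
    intro i hi
    simp only [Finset.mem_filter] at hi
    have h1 := decode_lt N (c i).1 (c i).2 hN
    have h2 := Scount_mono N hi.2
    simp only [Finset.mem_range]
    omega
  have hinj : Set.InjOn (fun i => decode N (c i).1)
      (Finset.univ.filter (fun i : Fin V => (c i).1.length ≤ t)) := by
    intro i _ j _ hij
    have : (c i).1 = (c j).1 := decode_inj N hN _ _ (c i).2 (c j).2 hij
    exact hc (Subtype.ext this)
  have := Finset.card_le_card_of_injOn _ hmaps hinj
  rwa [Finset.card_range] at this

lemma sum_indicator_eq (len T : ℕ) (h : len ≤ T) :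
    ∑ t ∈ Finset.range T, (if t < len then (1 : ℝ) else 0) = len := by
  rw [Finset.sum_boole]
  congr 1
  have : Finset.filter (fun t => t < len) (Finset.range T) = Finset.range len := by
    ext t
    simp only [Finset.mem_filter, Finset.mem_range]
    omega
  rw [this, Finset.card_range]
lemma layer_ineq {V N : ℕ} (hN : 2 ≤ N) (p : Fin V → ℝ) (hppos : ∀ i, 0 < p i)
    (hpmono : ∀ i j : Fin V, i ≤ j → p j ≤ p i)
    (c : Fin V → {w : List (Fin N) // w ≠ []}) (hc : Function.Injective c) (t : ℕ) :
    ∑ i ∈ Finset.univ.filter (fun i : Fin V => t < ell N i.val), p i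
      ≤ ∑ i ∈ Finset.univ.filter (fun i : Fin V => t < (c i).1.length), p i := by
  have hsplit1 := Finset.sum_filter_add_sum_filter_not Finset.univ
    (fun i : Fin V => t < ell N i.val) p
  have hsplit2 := Finset.sum_filter_add_sum_filter_not Finset.univ
    (fun i : Fin V => t < (c i).1.length) p
  have hkey : ∑ i ∈ Finset.univ.filter (fun i : Fin V => ¬ t < (c i).1.length), p i
      ≤ ∑ i ∈ Finset.univ.filter (fun i : Fin V => ¬ t < ell N i.val), p i := by
    have hf1 : Finset.univ.filter (fun i : Fin V => ¬ t < (c i).1.length)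
        = Finset.univ.filter (fun i : Fin V => (c i).1.length ≤ t) := by
      apply Finset.filter_congr; intro i _; simp [Nat.not_lt]
    have hf2 : Finset.univ.filter (fun i : Fin V => ¬ t < ell N i.val)
        = Finset.univ.filter (fun i : Fin V => i.val < Scount N t) := by
      apply Finset.filter_congr; intro i _
      simp only [Nat.not_lt, eq_iff_iff]
      exact ell_le_iff N i.val t (by omega)
    rw [hf1, hf2]
    exact sum_le_head p hppos hpmono (Scount N t) _ (card_short_le (by omega) c hc t)
  linarith

lemma lower_bound {V N : ℕ} (hN : 2 ≤ N) (p : Fin V → ℝ) (hppos : ∀ i, 0 < p i)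
    (hpmono : ∀ i j : Fin V, i ≤ j → p j ≤ p i)
    (c : Fin V → {w : List (Fin N) // w ≠ []}) (hc : Function.Injective c) :
    ∑ i, p i * (ell N i.val : ℝ) ≤ ∑ i, p i * ((c i).1.length : ℝ) := by
  set T : ℕ := (Finset.univ.sup (fun i : Fin V => max ((c i).1.length) (ell N i.val))) + 1
    with hT
  have hT1 : ∀ i : Fin V, (c i).1.length ≤ T := by
    intro i
    have := Finset.le_sup (f := fun i : Fin V => max ((c i).1.length) (ell N i.val))
      (Finset.mem_univ i)
    omega
  have hT2 : ∀ i : Fin V, ell N i.val ≤ T := by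
    intro i
    have := Finset.le_sup (f := fun i : Fin V => max ((c i).1.length) (ell N i.val))
      (Finset.mem_univ i)
    omega
  have expand : ∀ (len : Fin V → ℕ), (∀ i, len i ≤ T) →
      ∑ i, p i * (len i : ℝ)
        = ∑ t ∈ Finset.range T, ∑ i ∈ Finset.univ.filter (fun i => t < len i), p i := by
    intro len hlen
    have h1 : ∀ i : Fin V, p i * (len i : ℝ)
        = ∑ t ∈ Finset.range T, (if t < len i then p i else 0) := by
      intro i
      rw [show (∑ t ∈ Finset.range T, (if t < len i then p i else 0))
          = ∑ t ∈ Finset.range T, p i * (if t < len i then (1:ℝ) else 0) by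
        apply Finset.sum_congr rfl; intro t _; rw [mul_ite, mul_one, mul_zero]]
      rw [← Finset.mul_sum, sum_indicator_eq (len i) T (hlen i)]
    calc ∑ i, p i * (len i : ℝ)
        = ∑ i, ∑ t ∈ Finset.range T, (if t < len i then p i else 0) := by
          exact Finset.sum_congr rfl fun i _ => h1 i
      _ = ∑ t ∈ Finset.range T, ∑ i, (if t < len i then p i else 0) := Finset.sum_comm
      _ = ∑ t ∈ Finset.range T, ∑ i ∈ Finset.univ.filter (fun i => t < len i), p i := by
          exact Finset.sum_congr rfl fun t _ => (Finset.sum_filter _ _).symm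
  rw [expand (fun i => ell N i.val) hT2, expand (fun i => (c i).1.length) hT1]
  exact Finset.sum_le_sum fun t _ => layer_ineq hN p hppos hpmono c hc t

/-- Optimal non-singular coding: with types sorted by nonincreasing
probability and codes being distinct nonempty strings over an `N`-letter
alphabet (`N ≥ 2`), the minimum expected code length is
`L_min = Σ_{i=1}^V p_i · ⌈log_N((1 − 1/N)·i + 1)⌉`. -/
theorem stmt16 (V N : ℕ) (hN : 2 ≤ N) (p : Fin V → ℝ)
    (hppos : ∀ i, 0 < p i)
    (hpmono : ∀ i j : Fin V, i ≤ j → p j ≤ p i) :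
    IsLeast
      {L : ℝ | ∃ c : Fin V → {w : List (Fin N) // w ≠ []},
        Function.Injective c ∧ L = ∑ i, p i * ((c i).1.length : ℝ)}
      (∑ i : Fin V, p i *
        ((⌈Real.logb N ((1 - 1 / (N : ℝ)) * ((i : ℕ) + 1) + 1)⌉ : ℤ) : ℝ)) := by
  have hN0 : 0 < N := by omega
  have hceil : ∀ i : Fin V,
      ((⌈Real.logb N ((1 - 1 / (N : ℝ)) * ((i : ℕ) + 1) + 1)⌉ : ℤ) : ℝ)
        = (ell N i.val : ℝ) := by
    intro i
    have := ell_eq_ceil N i.val hN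
    rw [← this]
    push_cast
    ring
  have htarget : (∑ i : Fin V, p i *
      ((⌈Real.logb N ((1 - 1 / (N : ℝ)) * ((i : ℕ) + 1) + 1)⌉ : ℤ) : ℝ))
        = ∑ i : Fin V, p i * (ell N i.val : ℝ) := by
    exact Finset.sum_congr rfl fun i _ => by rw [hceil i]
  constructor
  · refine ⟨fun i => ⟨word N hN0 i.val, word_ne_nil N hN0 i.val⟩, ?_, ?_⟩
    · intro i j hij
      have h1 : word N hN0 i.val = word N hN0 j.val := by
        simpa using congrArg Subtype.val hij
      have h2 : decode N (word N hN0 i.val) = decode N (word N hN0 j.val) := by rw [h1]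
      rw [decode_word N hN0, decode_word N hN0] at h2
      exact Fin.ext h2
    · rw [htarget]
      exact Finset.sum_congr rfl fun i _ => by rw [word_length N hN0]
  · rintro L ⟨c, hc, rfl⟩
    rw [htarget]
    exact lower_bound hN p hppos hpmono c hc
end

section
/- For N ≥ 2 and l_min = 1, the sequence of rank probabilities of random typing p_i = ((1−p_s)/N)^{l_i} · p_s/(1−p_s) with l_i = ⌈log_N((1−1/N)i + 1)⌉ is nonincreasing in i. -/
lemma monotone_toNat_ceil_logb {b c : ℝ} (hb : 1 < b) (hc : 0 ≤ c) :
    Monotone fun n : ℕ => ⌈Real.logb b (c * n + 1)⌉.toNat := by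
  intro m n hmn
  have hpos : 0 < c * m + 1 := by positivity
  have harg : c * m + 1 ≤ c * n + 1 := by gcongr
  exact Int.toNat_le_toNat (Int.ceil_mono (Real.logb_le_logb_of_le hb hpos harg))

lemma antitone_pow_mul_of_le_one {r a : ℝ} (hr₀ : 0 ≤ r) (hr₁ : r ≤ 1) (ha : 0 ≤ a) :
    Antitone fun l : ℕ => r ^ l * a :=
  fun _ _ hkl => mul_le_mul_of_nonneg_right (pow_le_pow_of_le_one hr₀ hr₁ hkl) ha

/-- For `N ≥ 2` and `l_min = 1`, the rank probabilities of random typing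
`p_i = ((1−p_s)/N)^{l_i} · p_s/(1−p_s)` with
`l_i = ⌈log_N((1 − 1/N)·i + 1)⌉` form a nonincreasing sequence in the rank. -/
theorem stmt19 (N : ℕ) (hN : 2 ≤ N) (ps : ℝ) (h0 : 0 < ps) (h1 : ps < 1) :
    ∀ i j : ℕ, 1 ≤ i → i ≤ j →
      ((1 - ps) / N) ^ (⌈Real.logb N ((1 - 1 / (N : ℝ)) * j + 1)⌉).toNat *
          (ps / (1 - ps)) ≤
        ((1 - ps) / N) ^ (⌈Real.logb N ((1 - 1 / (N : ℝ)) * i + 1)⌉).toNat *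
          (ps / (1 - ps)) := by
  intro i j _ hij
  have hN₁ : (1 : ℝ) < N := by exact_mod_cast hN
  have hlength := monotone_toNat_ceil_logb hN₁
    (sub_nonneg.2 ((div_le_one (by linarith)).2 hN₁.le)) hij
  have hprob : Antitone fun l : ℕ => ((1 - ps) / N) ^ l * (ps / (1 - ps)) :=
    antitone_pow_mul_of_le_one (div_nonneg (by linarith) (by positivity))
      ((div_le_one (by linarith)).2 (by linarith)) (div_nonneg h0.le (by linarith))
  exact hprob hlength
end
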